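/- Let A ⊆ Γ = F[x,y]/(x² + y⁴ − 1) be the subalgebra generated by 1, y², xy, and let M = xA + yA ⊆ Γ. Then M is an A-submodule of Γ that is not cyclic: there is no z ∈ M with M = zA. -/

import Mathlib

set_option synthInstance.maxHeartbeats 400000

open MvPolynomial

/-- The quotient ring `Γ = F[x,y]/(x² + y⁴ − 1)`. -/
abbrev Gam (F : Type*) [Field F] : Type _ :=
  MvPolynomial (Fin 2) F ⧸
    Ideal.span {(X 0 ^ 2 + X 1 ^ 4 - 1 : MvPolynomial (Fin 2) F)}

/-- The image of `x` in `Γ`. -/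
noncomputable abbrev xG (F : Type*) [Field F] : Gam F := Ideal.Quotient.mk _ (X 0)

/-- The image of `y` in `Γ`. -/
noncomputable abbrev yG (F : Type*) [Field F] : Gam F := Ideal.Quotient.mk _ (X 1)

/-- The subalgebra `A` of `Γ` generated by `1`, `y²`, `xy`. -/
noncomputable abbrev AG (F : Type*) [Field F] : Subalgebra F (Gam F) :=
  Algebra.adjoin F ({yG F ^ 2, xG F * yG F} : Set (Gam F))

/-!
If `M = zA`, then `z` divides both `x` and `y` in `Γ`, hence divides `x² + y⁴ = 1`, so `z` is a
unit. To see that this is impossible, send `Γ` to the quadratic algebra `F[t][ξ]`, `ξ² = 1 - t⁴`,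
by `x ↦ ξ`, `y ↦ t`. The involution `t ↦ -t`, `ξ ↦ -ξ` fixes the image of `A` and negates that of
`M`, so `z ↦ p + qξ` with `p` odd and `q` even. Its norm `p² - (1 - t⁴)q²` would be a unit of
`F[t]`, but the two terms have degrees `≡ 2` and `≡ 0` mod `4`, so they cannot cancel down to a
nonzero constant.
-/

open Polynomial

namespace Polynomial

theorem natDegree_one_sub_X_pow_four {R : Type*} [CommRing R] [Nontrivial R] :
    (1 - X ^ 4 : R[X]).natDegree = 4 := by
  rw [← neg_sub, natDegree_neg, ← C_1, natDegree_X_pow_sub_C]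

section Parity

variable {R : Type*} [Ring R] [NoZeroDivisors R] [CharZero R]

theorem even_natDegree_of_comp_neg_X_eq {p : R[X]} (h : p.comp (-X) = p) : Even p.natDegree := by
  by_contra hodd
  have hlc := congrArg leadingCoeff h
  rw [comp_neg_X_leadingCoeff_eq, (Nat.not_even_iff_odd.mp hodd).neg_one_pow, neg_one_mul,
    CharZero.neg_eq_self_iff, leadingCoeff_eq_zero] at hlc
  exact hodd (by simp [hlc])

theorem odd_natDegree_of_comp_neg_X_eq_neg {p : R[X]} (h : p.comp (-X) = -p) (hp : p ≠ 0) :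
    Odd p.natDegree := by
  by_contra heven
  have hlc := congrArg leadingCoeff h
  rw [comp_neg_X_leadingCoeff_eq, (Nat.not_odd_iff_even.mp heven).neg_one_pow, one_mul,
    leadingCoeff_neg, CharZero.eq_neg_self_iff, leadingCoeff_eq_zero] at hlc
  exact hp hlc

end Parity

theorem not_isUnit_mul_self_sub_mul_mul_of_comp_neg_X {R : Type*} [CommRing R]
    [NoZeroDivisors R] [CharZero R] {p q : R[X]} (hp : p.comp (-X) = -p)
    (hq : q.comp (-X) = q) : ¬IsUnit (p * p - (1 - X ^ 4) * q * q) := by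
  intro hu
  obtain rfl | hq0 := eq_or_ne q 0
  · rw [mul_zero, sub_zero] at hu
    have hpu := isUnit_of_mul_isUnit_left hu
    obtain rfl | hp0 := eq_or_ne p 0
    · exact not_isUnit_zero hpu
    · exact (odd_natDegree_of_comp_neg_X_eq_neg hp hp0).pos.ne' (natDegree_eq_zero_of_isUnit hpu)
  have hD : (1 - X ^ 4 : R[X]) ≠ 0 := fun h => by
    simpa [h] using natDegree_one_sub_X_pow_four (R := R)
  have hqq : ((1 - X ^ 4) * q * q).natDegree = 4 + 2 * q.natDegree := by
    rw [mul_assoc, natDegree_mul hD (mul_ne_zero hq0 hq0), natDegree_one_sub_X_pow_four,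
      natDegree_mul hq0 hq0, two_mul]
  have hne : (p * p).natDegree ≠ ((1 - X ^ 4) * q * q).natDegree := by
    rw [hqq]
    obtain rfl | hp0 := eq_or_ne p 0
    · rw [mul_zero, natDegree_zero]
      omega
    · obtain ⟨k, hk⟩ := odd_natDegree_of_comp_neg_X_eq_neg hp hp0
      obtain ⟨m, hm⟩ := even_natDegree_of_comp_neg_X_eq hq
      rw [natDegree_mul hp0 hp0]
      omega
  have h0 := natDegree_eq_zero_of_isUnit hu
  rcases hne.lt_or_gt with hlt | hgt
  · rw [natDegree_sub_eq_right_of_natDegree_lt hlt, hqq] at h0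
    omega
  · rw [natDegree_sub_eq_left_of_natDegree_lt hgt] at h0
    omega

end Polynomial

abbrev Quad (R : Type*) [CommRing R] : Type _ := QuadraticAlgebra R[X] (1 - Polynomial.X ^ 4) 0

namespace Quad

open QuadraticAlgebra

variable {R : Type*} [CommRing R]

noncomputable def negGens : Quad R →ₐ[R] Quad R where
  toFun z := ⟨z.re.comp (-Polynomial.X), -z.im.comp (-Polynomial.X)⟩
  map_one' := by ext1 <;> simp
  map_mul' z w := by ext1 <;> simp [mul_comp] <;> ring
  map_zero' := by ext1 <;> simp
  map_add' z w := by ext1 <;> simp [add_comm]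
  commutes' c := by
    rw [IsScalarTower.algebraMap_apply R R[X] (Quad R)]
    ext1 <;> simp

theorem omega_sq_add_X_pow_four :
    (ω : Quad R) ^ 2 + algebraMap R[X] (Quad R) Polynomial.X ^ 4 = 1 := by
  rw [sq, omega_mul_omega_eq_mk, ← map_pow, QuadraticAlgebra.algebraMap_eq]
  ext1 <;> simp

theorem negGens_apply (z : Quad R) :
    negGens z = ⟨z.re.comp (-Polynomial.X), -z.im.comp (-Polynomial.X)⟩ := rfl

variable [NoZeroDivisors R] [CharZero R]

theorem not_isUnit_of_negGens_eq_neg {z : Quad R} (h : negGens z = -z) : ¬IsUnit z := by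
  have hre : z.re.comp (-Polynomial.X) = -z.re := congrArg QuadraticAlgebra.re h
  have him : z.im.comp (-Polynomial.X) = z.im := neg_injective (congrArg QuadraticAlgebra.im h)
  rw [isUnit_iff_norm_isUnit, norm_def, zero_mul, zero_mul, add_zero]
  exact not_isUnit_mul_self_sub_mul_mul_of_comp_neg_X hre him

end Quad

section Curve

open Quad QuadraticAlgebra

variable {F : Type*} [Field F]

theorem xG_sq_add_yG_pow_four : xG F ^ 2 + yG F ^ 4 = 1 := by
  rw [← sub_eq_zero]
  exact Ideal.Quotient.eq_zero_iff_mem.2 (Ideal.subset_span rfl)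

theorem isUnit_of_dvd_xG_of_dvd_yG {z : Gam F} (hx : z ∣ xG F) (hy : z ∣ yG F) : IsUnit z := by
  obtain ⟨a, ha⟩ := hx
  obtain ⟨b, hb⟩ := hy
  refine IsUnit.of_mul_eq_one (a ^ 2 * z + b ^ 4 * z ^ 3) ?_
  linear_combination xG_sq_add_yG_pow_four (F := F) - (xG F + z * a) * ha -
    (yG F + z * b) * (yG F ^ 2 + (z * b) ^ 2) * hb

variable (F) in
noncomputable def toQuad : Gam F →ₐ[F] Quad F :=
  Ideal.Quotient.liftₐ _ (aeval ![ω, algebraMap F[X] (Quad F) Polynomial.X])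
    (by
      intro a ha
      obtain ⟨c, rfl⟩ := Ideal.mem_span_singleton'.mp ha
      simp [omega_sq_add_X_pow_four])

theorem toQuad_xG : toQuad F (xG F) = ω :=
  aeval_X _ _

theorem toQuad_yG : toQuad F (yG F) = algebraMap F[X] (Quad F) Polynomial.X :=
  aeval_X _ _

theorem negGens_toQuad_xG : negGens (toQuad F (xG F)) = -toQuad F (xG F) := by
  rw [toQuad_xG]
  ext1 <;> simp [negGens_apply]

theorem negGens_toQuad_yG : negGens (toQuad F (yG F)) = -toQuad F (yG F) := by
  rw [toQuad_yG]
  ext1 <;> simp [negGens_apply]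

theorem negGens_toQuad_of_mem_AG {a : Gam F} (ha : a ∈ AG F) :
    negGens (toQuad F a) = toQuad F a := by
  suffices AG F ≤ AlgHom.equalizer (negGens.comp (toQuad F)) (toQuad F) from this ha
  refine Algebra.adjoin_le ?_
  rintro _ (rfl | rfl) <;>
    simp [negGens_toQuad_xG, negGens_toQuad_yG]

theorem negGens_toQuad_of_mem_span {m : Gam F}
    (hm : m ∈ Submodule.span (AG F) ({xG F, yG F} : Set (Gam F))) :
    negGens (toQuad F m) = -toQuad F m := by
  induction hm using Submodule.span_induction with
  | mem v hv =>
    rcases hv with rfl | rfl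
    exacts [negGens_toQuad_xG, negGens_toQuad_yG]
  | zero => simp
  | add u v _ _ hu hv => rw [map_add, map_add, hu, hv, neg_add]
  | smul a v _ hv =>
    rw [Subalgebra.smul_def, smul_eq_mul, map_mul, map_mul, negGens_toQuad_of_mem_AG a.2, hv,
      mul_neg]

end Curve

/-- The `A`-submodule `M = xA + yA` of `Γ` is not cyclic: there is no `z ∈ M`
with `M = zA`. -/
theorem stmt11 (F : Type*) [Field F] [CharZero F] :
    ¬ ∃ z : Gam F, z ∈ Submodule.span (AG F) ({xG F, yG F} : Set (Gam F)) ∧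
      Submodule.span (AG F) ({xG F, yG F} : Set (Gam F)) =
        Submodule.span (AG F) ({z} : Set (Gam F)) := by
  rintro ⟨z, hzM, hspan⟩
  have hdvd : ∀ m ∈ Submodule.span (AG F) ({xG F, yG F} : Set (Gam F)), z ∣ m := by
    intro m hm
    rw [hspan, Submodule.mem_span_singleton] at hm
    obtain ⟨a, rfl⟩ := hm
    exact Dvd.intro_left _ rfl
  have hunit : IsUnit z := isUnit_of_dvd_xG_of_dvd_yG
    (hdvd _ (Submodule.subset_span (by simp))) (hdvd _ (Submodule.subset_span (by simp)))
  exact Quad.not_isUnit_of_negGens_eq_neg (negGens_toQuad_of_mem_span hzM) (hunit.map (toQuad F))
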